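/- Let s be a square root on an MV-algebra M and x ∈ M. If x = s(x) or x = s(x')', then x is a Boolean (idempotent) element, i.e., x ⊕ x = x. -/
import Mathlib


class MVAlg (M : Type*) where
  add : M → M → M
  compl : M → M
  zero : M
  one : M
  add_comm : ∀ x y, add x y = add y x
  add_assoc : ∀ x y z, add (add x y) z = add x (add y z)
  add_zero : ∀ x, add x zero = x
  compl_compl : ∀ x, compl (compl x) = x
  add_one : ∀ x, add x one = one
  chang : ∀ x y, add x (compl (add x (compl y))) = add y (compl (add y (compl x)))
  compl_zero : compl zero = one

namespace MVAlg

variable {M : Type*} [MVAlg M]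

/-- x ⊙ y := (x' ⊕ y')' -/
def odot (x y : M) : M := compl (add (compl x) (compl y))

/-- x ≤ y iff x' ⊕ y = 1 -/
def le (x y : M) : Prop := add (compl x) y = one

/-- x ∧ y := x ⊙ (x' ⊕ y) -/
def inf (x y : M) : M := odot x (add (compl x) y)

/-- x ∨ y := (x ⊙ y') ⊕ y -/
def sup (x y : M) : M := add (odot x (compl y)) y

/-- x ⊖ y := x ⊙ y' -/
def sub (x y : M) : M := odot x (compl y)

/-- A square root on an MV-algebra. -/
def IsSquareRoot (s : M → M) : Prop :=
  (∀ x : M, odot (s x) (s x) = x) ∧ ∀ x y : M, le (odot y y) x → le y (s x)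

end MVAlg

namespace MVAlg

variable {M : Type*} [MVAlg M]

lemma compl_one' : (compl (one : M)) = zero := by
  rw [← compl_zero, compl_compl]

lemma add_self_compl (x : M) : add x (compl x) = one := by
  have h := chang x (one : M)
  rw [compl_one', add_zero, add_comm (one : M) (compl x), add_one, compl_one',
    add_zero] at h
  exact h

lemma add_compl_self (x : M) : add (compl x) x = one := by
  rw [add_comm]; exact add_self_compl x

lemma le_antisymm' {x y : M} (h1 : le x y) (h2 : le y x) : x = y := by
  unfold le at h1 h2
  have h := chang x y
  rw [add_comm (compl x) y] at h1
  rw [add_comm (compl y) x] at h2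
  rw [h2, h1, compl_one', add_zero, add_zero] at h
  exact h

lemma odot_self_le (y : M) : le (odot y y) y := by
  unfold le odot
  rw [compl_compl, add_assoc, add_compl_self, add_one]

lemma le_odot_self {y : M} (h : add y y = y) : le y (odot y y) := by
  unfold le odot
  have hc := chang (compl y) y
  rw [compl_compl, h, add_self_compl] at hc
  exact hc

lemma bool_odot {y : M} (h : add y y = y) : odot y y = y :=
  le_antisymm' (odot_self_le y) (le_odot_self h)

end MVAlg

theorem square_root_fixed_boolean {M : Type*} [MVAlg M] (s : M → M)
    (hs : MVAlg.IsSquareRoot s) (x : M)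
    (h : x = s x ∨ x = MVAlg.compl (s (MVAlg.compl x))) :
    MVAlg.add x x = x := by
  obtain ⟨hsq, _⟩ := hs
  rcases h with h | h
  · -- x = s x, so odot x x = x, i.e. compl (x' ⊕ x') = x
    have h1 := hsq x
    rw [← h] at h1
    unfold MVAlg.odot at h1
    have h2 : MVAlg.add (MVAlg.compl x) (MVAlg.compl x) = MVAlg.compl x := by
      rw [← MVAlg.compl_compl (MVAlg.add (MVAlg.compl x) (MVAlg.compl x)), h1]
    have h3 := MVAlg.bool_odot h2
    unfold MVAlg.odot at h3
    rw [MVAlg.compl_compl] at h3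
    calc MVAlg.add x x = MVAlg.compl (MVAlg.compl (MVAlg.add x x)) :=
          (MVAlg.compl_compl _).symm
      _ = x := by rw [h3, MVAlg.compl_compl]
  · have h0 : MVAlg.compl x = s (MVAlg.compl x) := by
      rw [← MVAlg.compl_compl (s (MVAlg.compl x)), ← h]
    have h1 := hsq (MVAlg.compl x)
    rw [← h0] at h1
    unfold MVAlg.odot at h1
    rw [MVAlg.compl_compl] at h1
    calc MVAlg.add x x = MVAlg.compl (MVAlg.compl (MVAlg.add x x)) :=
          (MVAlg.compl_compl _).symm
      _ = x := by rw [h1, MVAlg.compl_compl]
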